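/- arXiv:cs/0605132 — 6 statements merged into one kernel-verified Lean document; each statement's English description precedes it below -/
import Mathlib

section
/- A partition P = {P_1, …, P_k} of N is D_c-stable if and only if the following two conditions hold: (i) for each i ∈ {1, …, k} and each pair of disjoint coalitions A and B with A ∪ B ⊆ P_i, one has v(A ∪ B) ≥ v(A) + v(B); and (ii) for each P-incompatible coalition T ⊆ N, one has ∑_{i=1}^k v(P_i ∩ T) ≥ v(T). -/
open Finset

variable {α : Type*} [DecidableEq α] [Fintype α]

/-- A collection: a family of pairwise disjoint nonempty coalitions of `N`. -/
def IsCollection (C : Finset (Finset α)) : Prop :=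
  (∀ S ∈ C, S ≠ ∅) ∧ (C : Set (Finset α)).PairwiseDisjoint id

/-- A partition of the set `S`: pairwise disjoint nonempty subsets whose union is `S`. -/
def IsPartitionOf (S : Finset α) (C : Finset (Finset α)) : Prop :=
  IsCollection C ∧ C.sup id = S

/-- A partition of the grand coalition `N` (= `Finset.univ`). -/
def IsPartition (P : Finset (Finset α)) : Prop :=
  IsPartitionOf Finset.univ P

/-- The social welfare of a collection. -/
def sw (v : Finset α → ℝ) (C : Finset (Finset α)) : ℝ := ∑ S ∈ C, v S

/-- The collection `C` in the frame of the partition `P`: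
`C[P] = {P₁ ∩ U, …, P_k ∩ U} \ {∅}` where `U` is the union of `C`. -/
def frame (C P : Finset (Finset α)) : Finset (Finset α) :=
  (P.image (fun Pi => Pi ∩ C.sup id)).erase ∅

/-- `P` is `D_c`-stable: `sw(C[P]) ≥ sw(C)` for every collection `C` in `N`. -/
def DcStable (v : Finset α → ℝ) (P : Finset (Finset α)) : Prop :=
  ∀ C : Finset (Finset α), IsCollection C → sw v (frame C P) ≥ sw v C

/-- `P` is `D_p`-stable: `sw(P) ≥ sw(Q)` for every partition `Q` of `N`. -/
def DpStable (v : Finset α → ℝ) (P : Finset (Finset α)) : Prop :=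
  ∀ Q : Finset (Finset α), IsPartition Q → sw v P ≥ sw v Q

/-- `Q` is `P`-homogeneous: every `Q_j` is contained in some `P_i` or contains some `P_i`. -/
def Homogeneous (P Q : Finset (Finset α)) : Prop :=
  ∀ Qj ∈ Q, ∃ Pi ∈ P, Qj ⊆ Pi ∨ Pi ⊆ Qj

/-- `P` is `D_hp`-stable: `sw(P) ≥ sw(Q)` for every `P`-homogeneous partition `Q` of `N`. -/
def DhpStable (v : Finset α → ℝ) (P : Finset (Finset α)) : Prop :=
  ∀ Q : Finset (Finset α), IsPartition Q → Homogeneous P Q → sw v P ≥ sw v Q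

/-- `P` is strictly `D_c`-stable: `sw(C[P]) > sw(C)` for every collection `C`
that is not a subset of `P`. -/
def StrictlyDcStable (v : Finset α → ℝ) (P : Finset (Finset α)) : Prop :=
  ∀ C : Finset (Finset α), IsCollection C → ¬ C ⊆ P → sw v (frame C P) > sw v C

/-- `P` is strictly `D_p`-stable. -/
def StrictlyDpStable (v : Finset α → ℝ) (P : Finset (Finset α)) : Prop :=
  ∀ Q : Finset (Finset α), IsPartition Q → Q ≠ P → sw v P > sw v Q

/-- `P` is strictly `D_hp`-stable. -/
def StrictlyDhpStable (v : Finset α → ℝ) (P : Finset (Finset α)) : Prop :=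
  ∀ Q : Finset (Finset α), IsPartition Q → Homogeneous P Q → Q ≠ P → sw v P > sw v Q

/-- The merge rule: distinct coalitions `T₁, …, T_k` (`k ≥ 2`) of `P` with
`∑ v(T_j) < v(∪ T_j)` are replaced by their union. -/
def MergeStep (v : Finset α → ℝ) (P P' : Finset (Finset α)) : Prop :=
  ∃ T : Finset (Finset α), T ⊆ P ∧ 2 ≤ T.card ∧
    ∑ S ∈ T, v S < v (T.sup id) ∧ P' = insert (T.sup id) (P \ T)

/-- The split rule: a coalition `T` of `P` admitting a partition `{T₁, …, T_k}` (`k ≥ 2`)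
with `v(T) < ∑ v(T_j)` is replaced by the coalitions `T₁, …, T_k`. -/
def SplitStep (v : Finset α → ℝ) (P P' : Finset (Finset α)) : Prop :=
  ∃ T ∈ P, ∃ D : Finset (Finset α), IsPartitionOf T D ∧ 2 ≤ D.card ∧
    v T < ∑ S ∈ D, v S ∧ P' = (P.erase T) ∪ D

/-!
Splitting each coalition `S` of a collection `C` along `P` does not lower welfare: for a
`P`-compatible `S` nothing changes, and for an incompatible one this is condition (ii).
Regrouping the pieces `Pᵢ ∩ S` by `i` and merging them inside `Pᵢ`, which (i) allows, yields
`C[P]`. Conversely, (i) and (ii) are the `D_c`-inequalities for `C = {A, B}` and `C = {T}`.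
-/

section

omit [Fintype α]

variable {v : Finset α → ℝ} {P : Finset (Finset α)}

def SuperadditiveOn (v : Finset α → ℝ) (X : Finset α) : Prop :=
  ∀ A B : Finset α, A ≠ ∅ → B ≠ ∅ → Disjoint A B → A ∪ B ⊆ X → v (A ∪ B) ≥ v A + v B

theorem SuperadditiveOn.add_le (hv : v ∅ = 0) {X : Finset α} (h : SuperadditiveOn v X)
    {A B : Finset α} (hAB : Disjoint A B) (hX : A ∪ B ⊆ X) : v A + v B ≤ v (A ∪ B) := by
  rcases eq_or_ne A ∅ with rfl | hA
  · simp [hv]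
  rcases eq_or_ne B ∅ with rfl | hB
  · simp [hv]
  exact h A B hA hB hAB hX

theorem SuperadditiveOn.sum_le_sup {ι : Type*} (hv : v ∅ = 0) {X : Finset α}
    (h : SuperadditiveOn v X) {s : Finset ι} {f : ι → Finset α}
    (hf : (s : Set ι).PairwiseDisjoint f) (hX : s.sup f ⊆ X) :
    ∑ i ∈ s, v (f i) ≤ v (s.sup f) := by
  classical
  induction s using Finset.induction_on with
  | empty => simp [hv]
  | insert i s hi ih =>
    rw [coe_insert, Set.pairwiseDisjoint_insert_of_notMem hi] at hf
    rw [sup_insert] at hX ⊢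
    rw [sum_insert hi]
    calc v (f i) + ∑ j ∈ s, v (f j) ≤ v (f i) + v (s.sup f) := by
          gcongr
          exact ih hf.1 (subset_union_right.trans hX)
      _ ≤ v (f i ∪ s.sup f) := h.add_le hv (Finset.disjoint_sup_right.2 hf.2) hX

theorem sum_inter_eq_of_subset (hv : v ∅ = 0) (hP : (P : Set (Finset α)).PairwiseDisjoint id)
    {Pi S : Finset α} (hPi : Pi ∈ P) (hS : S ⊆ Pi) : ∑ Pj ∈ P, v (Pj ∩ S) = v S := by
  rw [sum_eq_single_of_mem Pi hPi, inter_eq_right.2 hS]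
  intro Pj hPj hne
  have hdisj : Disjoint Pj S := (hP hPj hPi hne).mono_right hS
  rw [disjoint_iff_inter_eq_empty.1 hdisj, hv]

theorem sw_frame (hv : v ∅ = 0) (hP : (P : Set (Finset α)).PairwiseDisjoint id)
    (C : Finset (Finset α)) : sw v (frame C P) = ∑ Pi ∈ P, v (Pi ∩ C.sup id) := by
  rw [sw, frame, sum_erase _ hv, sum_image_of_disjoint (f := (· ∩ C.sup id)) hv
    (hP.mono fun Pi => (inter_subset_left : Pi ∩ C.sup id ⊆ Pi))]

theorem DcStable.superadditiveOn (hv : v ∅ = 0) (hP : (P : Set (Finset α)).PairwiseDisjoint id)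
    (h : DcStable v P) {Pi : Finset α} (hPi : Pi ∈ P) : SuperadditiveOn v Pi := by
  intro A B hA hB hAB hX
  have hne : A ≠ B := by
    rintro rfl
    exact hA (disjoint_self.1 hAB)
  have hC : IsCollection ({A, B} : Finset (Finset α)) :=
    ⟨by simp [hA, hB], by rw [coe_pair]; exact Set.pairwise_pair.2 fun _ => ⟨hAB, hAB.symm⟩⟩
  have hstable := h {A, B} hC
  simp only [sw_frame hv hP, sup_insert, sup_singleton, id_eq, sup_eq_union] at hstable
  rwa [sum_inter_eq_of_subset hv hP hPi hX, sw, sum_pair hne] at hstable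

theorem DcStable.le_sum_inter (hv : v ∅ = 0) (hP : (P : Set (Finset α)).PairwiseDisjoint id)
    (h : DcStable v P) {T : Finset α} (hT : T ≠ ∅) : v T ≤ ∑ Pi ∈ P, v (Pi ∩ T) := by
  have hstable := h {T} ⟨by simpa, by simp⟩
  rwa [sw_frame hv hP, sup_singleton, id, sw, sum_singleton] at hstable

theorem dcStable_of_superadditiveOn (hv : v ∅ = 0)
    (hP : (P : Set (Finset α)).PairwiseDisjoint id) (hsuper : ∀ Pi ∈ P, SuperadditiveOn v Pi)
    (hincomp : ∀ T : Finset α, T ≠ ∅ → (∀ Pi ∈ P, ¬ T ⊆ Pi) → ∑ Pi ∈ P, v (Pi ∩ T) ≥ v T) :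
    DcStable v P := by
  intro C hC
  have hsplit : ∀ S ∈ C, v S ≤ ∑ Pi ∈ P, v (Pi ∩ S) := by
    intro S hS
    by_cases hcomp : ∃ Pi ∈ P, S ⊆ Pi
    · obtain ⟨Pi, hPi, hSPi⟩ := hcomp
      exact (sum_inter_eq_of_subset hv hP hPi hSPi).ge
    · push Not at hcomp
      exact hincomp S (hC.1 S hS) hcomp
  calc sw v C ≤ ∑ S ∈ C, ∑ Pi ∈ P, v (Pi ∩ S) := sum_le_sum hsplit
    _ = ∑ Pi ∈ P, ∑ S ∈ C, v (Pi ∩ S) := sum_comm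
    _ ≤ ∑ Pi ∈ P, v (Pi ∩ C.sup id) := sum_le_sum fun Pi hPi => by
          have hsup : C.sup (Pi ∩ ·) = Pi ∩ C.sup id := (sup_inf_distrib_left C id Pi).symm
          simpa only [hsup] using (hsuper Pi hPi).sum_le_sup (f := (Pi ∩ ·)) hv
            (hC.2.mono fun _ => inter_subset_right) (hsup ▸ inter_subset_left)
    _ = sw v (frame C P) := (sw_frame hv hP C).symm

end

theorem Dc_stable_characterization_general (v : Finset α → ℝ) (hv : v ∅ = 0)
    (P : Finset (Finset α)) (hP : IsPartition P) :
    DcStable v P ↔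
      ((∀ Pi ∈ P, ∀ A B : Finset α, A ≠ ∅ → B ≠ ∅ → Disjoint A B → A ∪ B ⊆ Pi →
          v (A ∪ B) ≥ v A + v B) ∧
       (∀ T : Finset α, T ≠ ∅ → (∀ Pi ∈ P, ¬ T ⊆ Pi) →
          ∑ Pi ∈ P, v (Pi ∩ T) ≥ v T)) := by
  have hdisj := hP.1.2
  exact ⟨fun h => ⟨fun _ hPi => h.superadditiveOn hv hdisj hPi,
      fun _ hT _ => h.le_sum_inter hv hdisj hT⟩,
    fun ⟨hsuper, hincomp⟩ => dcStable_of_superadditiveOn hv hdisj hsuper hincomp⟩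

/-- Theorem 1: characterization of `D_c`-stable partitions. -/
theorem Dc_stable_characterization [Nonempty α] (v : Finset α → ℝ) (hv : v ∅ = 0)
    (P : Finset (Finset α)) (hP : IsPartition P) :
    DcStable v P ↔
      ((∀ Pi ∈ P, ∀ A B : Finset α, A ≠ ∅ → B ≠ ∅ → Disjoint A B → A ∪ B ⊆ Pi →
          v (A ∪ B) ≥ v A + v B) ∧
       (∀ T : Finset α, T ≠ ∅ → (∀ Pi ∈ P, ¬ T ⊆ Pi) →
          ∑ Pi ∈ P, v (Pi ∩ T) ≥ v T)) :=
  Dc_stable_characterization_general v hv P hP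
end

section
/- A coalitional TU-game (v, N) is additive if and only if every partition of N is D_c-stable. -/
open Finset

variable {α : Type*} [DecidableEq α] [Fintype α]

/-! In an additive game the welfare of a collection is the sum of the singleton values over its
union, and framing a collection in a partition changes neither its union nor its being a
collection. Conversely, two collections `C` and `D` with the same union have equal welfare as
soon as every partition is `D_c`-stable: completing `D` by the singletons outside its union gives
a partition in whose frame `C` becomes `D`, so `sw C ≤ sw D`. Additivity is this equality for
`C = {A, B}` and `D = {A ∪ B}`. -/

def IsAdditive (v : Finset α → ℝ) : Prop :=
  ∀ A B : Finset α, A ≠ ∅ → B ≠ ∅ → Disjoint A B → v A + v B = v (A ∪ B)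

namespace IsAdditive

variable {v : Finset α → ℝ}

omit [Fintype α] in
theorem eq_sum_singleton (hv : IsAdditive v) {S : Finset α} (hS : S.Nonempty) :
    v S = ∑ x ∈ S, v {x} := by
  induction hS using Finset.Nonempty.cons_induction with
  | singleton a => simp
  | cons a s ha hs ih =>
    rw [sum_cons, ← ih, cons_eq_insert, insert_eq,
      hv {a} s (singleton_ne_empty a) hs.ne_empty (disjoint_singleton_left.2 ha)]

omit [Fintype α] in
theorem sw_eq_sum_singleton (hv : IsAdditive v) {C : Finset (Finset α)} (hC : IsCollection C) :
    sw v C = ∑ x ∈ C.sup id, v {x} := by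
  rw [sup_eq_biUnion, sw, sum_biUnion hC.2]
  exact sum_congr rfl fun S hS => hv.eq_sum_singleton (nonempty_iff_ne_empty.2 (hC.1 S hS))

end IsAdditive

section Frame

variable {C P : Finset (Finset α)}

omit [Fintype α] in
theorem isCollection_frame (hP : (P : Set (Finset α)).PairwiseDisjoint id) : IsCollection (frame C P) := by
  refine ⟨fun S hS => ne_of_mem_erase hS, fun S hS T hT hST => ?_⟩
  obtain ⟨Pi, hPi, rfl⟩ := mem_image.1 (mem_of_mem_erase hS)
  obtain ⟨Pj, hPj, rfl⟩ := mem_image.1 (mem_of_mem_erase hT)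
  have hij : Pi ≠ Pj := by rintro rfl; exact hST rfl
  exact (hP hPi hPj hij).mono inter_subset_left inter_subset_left

omit [Fintype α] in
theorem sup_frame (hCP : C.sup id ⊆ P.sup id) : (frame C P).sup id = C.sup id := by
  rw [frame, ← bot_eq_empty, sup_erase_bot, sup_image]
  change P.sup (fun Pi => Pi ⊓ C.sup id) = C.sup id
  rw [← sup_inf_distrib_right]
  exact inf_eq_right.2 hCP

theorem IsAdditive.dcStable {v : Finset α → ℝ} (hv : IsAdditive v) (hP : IsPartition P) :
    DcStable v P := by
  intro C hC
  have hCP : C.sup id ⊆ P.sup id := hP.2 ▸ subset_univ _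
  rw [hv.sw_eq_sum_singleton hC, hv.sw_eq_sum_singleton (isCollection_frame hP.1.2),
    sup_frame hCP]

end Frame

section Completion

def completeBySingletons (D : Finset (Finset α)) : Finset (Finset α) :=
  D ∪ (univ \ D.sup id).image singleton

variable {C D : Finset (Finset α)}

theorem IsCollection.isPartition_completeBySingletons (hD : IsCollection D) :
    IsPartition (completeBySingletons D) := by
  refine ⟨⟨?_, ?_⟩, ?_⟩
  · simp only [completeBySingletons, mem_union, mem_image]
    rintro S (hS | ⟨x, -, rfl⟩)
    exacts [hD.1 S hS, singleton_ne_empty x]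
  · rw [completeBySingletons, coe_union, Set.pairwiseDisjoint_union]
    refine ⟨hD.2, ?_, ?_⟩
    · simp only [coe_image, Set.PairwiseDisjoint, Set.Pairwise, Set.mem_image]
      rintro _ ⟨x, -, rfl⟩ _ ⟨y, -, rfl⟩ hxy
      exact disjoint_singleton.2 fun h => hxy (h ▸ rfl)
    · simp only [mem_coe, mem_image, mem_sdiff]
      rintro S hS _ ⟨x, ⟨-, hx⟩, rfl⟩ -
      exact disjoint_singleton_right.2 fun h => hx (le_sup (f := id) hS h)
  · rw [completeBySingletons, sup_union, sup_image, Function.id_comp, sup_singleton_eq_self]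
    exact union_sdiff_of_subset (subset_univ _)

theorem frame_completeBySingletons (hD : ∀ S ∈ D, S ≠ ∅) (hCD : C.sup id = D.sup id) :
    frame C (completeBySingletons D) = D := by
  have hsub : ∀ S ∈ D, S ∩ D.sup id = S := fun S hS => inter_eq_left.2 (le_sup (f := id) hS)
  ext S
  simp only [frame, completeBySingletons, hCD, mem_erase, mem_image, mem_union, mem_sdiff]
  constructor
  · rintro ⟨hS, T, hT | ⟨x, ⟨-, hx⟩, rfl⟩, rfl⟩
    · rwa [hsub T hT]
    · exact absurd (singleton_inter_of_notMem hx) hS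
  · exact fun hS => ⟨hD S hS, S, Or.inl hS, hsub S hS⟩

theorem sw_eq_of_forall_dcStable {v : Finset α → ℝ}
    (hstab : ∀ P : Finset (Finset α), IsPartition P → DcStable v P)
    (hC : IsCollection C) (hD : IsCollection D) (hCD : C.sup id = D.sup id) :
    sw v C = sw v D := by
  have hCD' := hstab _ hD.isPartition_completeBySingletons C hC
  have hDC' := hstab _ hC.isPartition_completeBySingletons D hD
  rw [frame_completeBySingletons hD.1 hCD] at hCD'
  rw [frame_completeBySingletons hC.1 hCD.symm] at hDC'
  exact le_antisymm hCD' hDC'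

end Completion

omit [DecidableEq α] [Fintype α] in
theorem isCollection_singleton {S : Finset α} (hS : S ≠ ∅) : IsCollection {S} :=
  ⟨fun _ hT => mem_singleton.1 hT ▸ hS, by simp⟩

omit [Fintype α] in
theorem isCollection_pair {A B : Finset α} (hA : A ≠ ∅) (hB : B ≠ ∅) (hAB : Disjoint A B) :
    IsCollection {A, B} := by
  refine ⟨by simp [hA, hB], ?_⟩
  rw [coe_pair, Set.PairwiseDisjoint, Set.pairwise_pair]
  exact fun _ => ⟨hAB, hAB.symm⟩

theorem isAdditive_of_forall_dcStable {v : Finset α → ℝ}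
    (hstab : ∀ P : Finset (Finset α), IsPartition P → DcStable v P) : IsAdditive v := by
  intro A B hA hB hAB
  have hsw := sw_eq_of_forall_dcStable hstab (isCollection_pair hA hB hAB)
    (isCollection_singleton (S := A ∪ B) (by simp [hA])) (by simp)
  rwa [sw, sum_pair (hAB.ne hA), sw, sum_singleton] at hsw

theorem additive_iff_all_Dc_stable_general (v : Finset α → ℝ) :
    (∀ A B : Finset α, A ≠ ∅ → B ≠ ∅ → Disjoint A B → v A + v B = v (A ∪ B)) ↔
      (∀ P : Finset (Finset α), IsPartition P → DcStable v P) :=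
  ⟨fun hv _ hP => IsAdditive.dcStable hv hP, isAdditive_of_forall_dcStable⟩

/-- Theorem 2: a game is additive iff every partition is `D_c`-stable. -/
theorem additive_iff_all_Dc_stable [Nonempty α] (v : Finset α → ℝ) (hv : v ∅ = 0) :
    (∀ A B : Finset α, A ≠ ∅ → B ≠ ∅ → Disjoint A B → v A + v B = v (A ∪ B)) ↔
      (∀ P : Finset (Finset α), IsPartition P → DcStable v P) :=
  additive_iff_all_Dc_stable_general v
end

section
/- If P is a D_c-stable partition of N, then sw(P) = max_Q sw(Q), where the maximum is taken over all partitions Q of N. -/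
open Finset

variable {α : Type*} [DecidableEq α] [Fintype α]

theorem frame_of_sup_eq_univ {C : Finset (Finset α)} (hC : C.sup id = univ)
    (P : Finset (Finset α)) : frame C P = P.erase ∅ := by
  simp only [frame, hC, inter_univ, image_id']

theorem IsPartition.frame_eq {P Q : Finset (Finset α)} (hP : IsPartition P) (hQ : IsPartition Q) :
    frame Q P = P := by
  rw [frame_of_sup_eq_univ hQ.2, erase_eq_of_notMem fun h => hP.1.1 ∅ h rfl]

theorem Dc_stable_maximizes_sw_general (v : Finset α → ℝ)
    (P : Finset (Finset α)) (hP : IsPartition P) (hstable : DcStable v P) :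
    IsGreatest {x : ℝ | ∃ Q : Finset (Finset α), IsPartition Q ∧ sw v Q = x} (sw v P) := by
  refine ⟨⟨P, hP, rfl⟩, ?_⟩
  rintro _ ⟨Q, hQ, rfl⟩
  simpa only [hP.frame_eq hQ] using hstable Q hQ.1

/-- Note 1: a `D_c`-stable partition maximizes social welfare among all partitions. -/
theorem Dc_stable_maximizes_sw [Nonempty α] (v : Finset α → ℝ) (hv : v ∅ = 0)
    (P : Finset (Finset α)) (hP : IsPartition P) (hstable : DcStable v P) :
    IsGreatest {x : ℝ | ∃ Q : Finset (Finset α), IsPartition Q ∧ sw v Q = x} (sw v P) :=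
  Dc_stable_maximizes_sw_general v P hP hstable
end

section
/- The partition P = {{1}, {2}, …, {n}} of N into singletons is D_c-stable if and only if the inequality ∑_{i ∈ T} v({i}) ≥ v(T) holds for all coalitions T ⊆ N. Moreover, if all these inequalities are strict (for all coalitions T with at least two elements), then P is the unique D_c-stable partition of N. -/
open Finset

variable {α : Type*} [DecidableEq α] [Fintype α]

omit [DecidableEq α] [Fintype α] in
theorem isCollection_singleton_s4 {T : Finset α} (hT : T ≠ ∅) : IsCollection {T} :=
  ⟨by simpa using hT, by simp⟩

omit [Fintype α] in
theorem isCollection_image_singleton (U : Finset α) :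
    IsCollection (U.image fun i => ({i} : Finset α)) := by
  refine ⟨by simp, ?_⟩
  rw [coe_image]
  exact fun _ ⟨i, _, hi⟩ _ ⟨j, _, hj⟩ hne => by
    subst hi hj
    exact disjoint_singleton.mpr fun h => hne (h ▸ rfl)

omit [Fintype α] in
theorem sw_image_singleton (v : Finset α → ℝ) (U : Finset α) :
    sw v (U.image fun i => ({i} : Finset α)) = ∑ i ∈ U, v {i} :=
  sum_image fun _ _ _ _ => singleton_inj.mp

theorem frame_image_singleton (C : Finset (Finset α)) :
    frame C (univ.image fun i => ({i} : Finset α)) = (C.sup id).image fun i => {i} := by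
  ext S
  simp only [frame, mem_erase, image_image, Function.comp_def, mem_image, mem_univ, true_and]
  constructor
  · rintro ⟨hS, i, rfl⟩
    by_cases hi : i ∈ C.sup id
    · exact ⟨i, hi, (singleton_inter_of_mem hi).symm⟩
    · exact absurd (singleton_inter_of_notMem hi) hS
  · rintro ⟨i, hi, rfl⟩
    exact ⟨singleton_ne_empty i, i, singleton_inter_of_mem hi⟩

omit [Fintype α] in
theorem frame_eq_singleton_of_sup_eq {C P : Finset (Finset α)} {T : Finset α}
    (hP : (P : Set (Finset α)).PairwiseDisjoint id) (hTP : T ∈ P) (hT : T ≠ ∅)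
    (hC : C.sup id = T) : frame C P = {T} := by
  ext S
  simp only [frame, mem_erase, mem_image, hC, mem_singleton]
  constructor
  · rintro ⟨hS, B, hB, rfl⟩
    obtain rfl | hBT := eq_or_ne B T
    · exact inter_self B
    · exact absurd (disjoint_iff_inter_eq_empty.mp (hP hB hTP hBT)) hS
  · rintro rfl
    exact ⟨hT, S, hTP, inter_self S⟩

omit [Fintype α] in
theorem IsPartitionOf.eq_image_singleton {S : Finset α} {P : Finset (Finset α)}
    (hP : IsPartitionOf S P) (hcard : ∀ T ∈ P, T.card ≤ 1) :
    P = S.image fun i => {i} := by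
  have hsingle : ∀ T ∈ P, ∀ i ∈ T, T = {i} := fun T hT i hi =>
    eq_singleton_iff_unique_mem.mpr ⟨hi, fun j hj => card_le_one.mp (hcard T hT) j hj i hi⟩
  ext T
  simp only [mem_image]
  constructor
  · intro hT
    obtain ⟨i, hi⟩ := nonempty_iff_ne_empty.mpr (hP.1.1 T hT)
    exact ⟨i, hP.2 ▸ le_sup (f := id) hT hi, (hsingle T hT i hi).symm⟩
  · rintro ⟨i, hi, rfl⟩
    obtain ⟨B, hB, hiB⟩ := mem_sup.mp (hP.2 ▸ hi : i ∈ P.sup id)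
    exact hsingle B hB i hiB ▸ hB

theorem dcStable_image_singleton_iff (v : Finset α → ℝ) :
    DcStable v (univ.image fun i : α => ({i} : Finset α)) ↔
      ∀ T : Finset α, T ≠ ∅ → ∑ i ∈ T, v {i} ≥ v T := by
  simp only [DcStable, frame_image_singleton, sw_image_singleton]
  refine ⟨fun h T hT => by simpa [sw] using h {T} (isCollection_singleton_s4 hT), fun h C hC => ?_⟩
  calc ∑ i ∈ C.sup id, v {i} = ∑ S ∈ C, ∑ i ∈ S, v {i} := by
        rw [sup_eq_biUnion, sum_biUnion hC.2]; rfl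
    _ ≥ sw v C := sum_le_sum fun S hS => h S (hC.1 S hS)

/-- A block `T` with two players would contradict `D_c`-stability tested on the collection of
singletons of `T`, whose frame in `P` is `{T}`. -/
theorem IsPartition.eq_image_singleton_of_dcStable {v : Finset α → ℝ}
    (hstrict : ∀ T : Finset α, 2 ≤ T.card → ∑ i ∈ T, v {i} > v T)
    {P : Finset (Finset α)} (hP : IsPartition P) (hPv : DcStable v P) :
    P = univ.image fun i => {i} := by
  refine IsPartitionOf.eq_image_singleton hP fun T hTP => not_lt.mp fun hT => ?_
  have hframe : frame (T.image fun i => {i}) P = {T} :=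
    frame_eq_singleton_of_sup_eq hP.1.2 hTP (hP.1.1 T hTP) (by ext; simp)
  have := hPv _ (isCollection_image_singleton T)
  rw [hframe, sw_image_singleton] at this
  exact (hstrict T hT).not_ge (by simpa [sw] using this)

theorem singletons_Dc_stable_general (v : Finset α → ℝ) :
    (DcStable v (Finset.univ.image (fun i : α => ({i} : Finset α))) ↔
      ∀ T : Finset α, T ≠ ∅ → ∑ i ∈ T, v {i} ≥ v T) ∧
    ((∀ T : Finset α, 2 ≤ T.card → ∑ i ∈ T, v {i} > v T) →
      DcStable v (Finset.univ.image (fun i : α => ({i} : Finset α))) ∧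
      ∀ P : Finset (Finset α), IsPartition P → DcStable v P →
        P = Finset.univ.image (fun i : α => ({i} : Finset α))) := by
  refine ⟨dcStable_image_singleton_iff v, fun hstrict => ⟨?_, fun P hP hPv =>
    hP.eq_image_singleton_of_dcStable hstrict hPv⟩⟩
  refine (dcStable_image_singleton_iff v).mpr fun T hT => ?_
  obtain hT1 | hT2 := (one_le_card.mpr (nonempty_iff_ne_empty.mpr hT)).eq_or_lt
  · obtain ⟨i, rfl⟩ := card_eq_one.mp hT1.symm
    simp
  · exact (hstrict T hT2).le

/-- Corollary: the partition into singletons is `D_c`-stable iff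
`∑_{i ∈ T} v({i}) ≥ v(T)` for all coalitions `T`; if all these inequalities are strict
(for `|T| ≥ 2`), then it is the unique `D_c`-stable partition. -/
theorem singletons_Dc_stable [Nonempty α] (v : Finset α → ℝ) (hv : v ∅ = 0) :
    (DcStable v (Finset.univ.image (fun i : α => ({i} : Finset α))) ↔
      ∀ T : Finset α, T ≠ ∅ → ∑ i ∈ T, v {i} ≥ v T) ∧
    ((∀ T : Finset α, 2 ≤ T.card → ∑ i ∈ T, v {i} > v T) →
      DcStable v (Finset.univ.image (fun i : α => ({i} : Finset α))) ∧
      ∀ P : Finset (Finset α), IsPartition P → DcStable v P →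
        P = Finset.univ.image (fun i : α => ({i} : Finset α))) :=
  singletons_Dc_stable_general v
end

section
/- Every iteration of the merge and split rules terminates: there is no infinite sequence P_0, P_1, P_2, … of partitions of N in which each P_{m+1} is obtained from P_m by an application of the merge rule or the split rule. -/
open Finset

variable {α : Type*} [DecidableEq α] [Fintype α]

/-! Each application of the merge or the split rule strictly increases the social welfare of the
partition, because the sum over the coalitions not involved is unchanged. A sequence of partitions
of the finite set `N` along which the welfare strictly increases is injective, so it cannot be
infinite. -/

section Welfare

variable {β : Type*}

lemma IsCollection.eq_of_subset {C : Finset (Finset β)} (hC : IsCollection C)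
    {A B : Finset β} (hA : A ∈ C) (hB : B ∈ C) (hAB : A ⊆ B) : A = B := by
  by_contra hne
  obtain ⟨x, hx⟩ := nonempty_iff_ne_empty.mpr (hC.1 A hA)
  exact disjoint_left.mp (hC.2 hA hB hne) hx (hAB hx)

variable [DecidableEq β] {v : Finset β → ℝ} {P P' : Finset (Finset β)}

lemma sw_lt_sw_of_mergeStep (hP : IsCollection P) (h : MergeStep v P P') :
    sw v P < sw v P' := by
  obtain ⟨T, hTP, hcard, hlt, rfl⟩ := h
  obtain ⟨S, hS⟩ : T.Nonempty := card_pos.mp (by omega)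
  have hU : T.sup id ∉ P \ T := fun hU => by
    obtain ⟨hUP, hUT⟩ := mem_sdiff.mp hU
    exact hUT (hP.eq_of_subset (hTP hS) hUP (le_sup (f := id) hS) ▸ hS)
  rw [sw, sw, sum_insert hU, ← sum_sdiff hTP]
  linarith

lemma sw_lt_sw_of_splitStep (hP : IsCollection P) (h : SplitStep v P P') :
    sw v P < sw v P' := by
  obtain ⟨T, hT, D, ⟨-, hDT⟩, -, hlt, rfl⟩ := h
  have hdisj : Disjoint (P.erase T) D := disjoint_left.mpr fun S hSP hSD => by
    obtain ⟨hST, hSP⟩ := mem_erase.mp hSP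
    exact hST (hP.eq_of_subset hSP hT (hDT ▸ le_sup (f := id) hSD))
  rw [sw, sw, sum_union hdisj, ← sum_erase_add P v hT]
  linarith

end Welfare

theorem merge_split_terminates_general (v : Finset α → ℝ) :
    ¬ ∃ f : ℕ → Finset (Finset α), (∀ n, IsPartition (f n)) ∧
      ∀ n, MergeStep v (f n) (f (n + 1)) ∨ SplitStep v (f n) (f (n + 1)) := by
  rintro ⟨f, hpart, hstep⟩
  have hmono : StrictMono (sw v ∘ f) := strictMono_nat_of_lt_succ fun n =>
    (hstep n).elim (sw_lt_sw_of_mergeStep (hpart n).1) (sw_lt_sw_of_splitStep (hpart n).1)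
  exact not_injective_infinite_finite f hmono.injective.of_comp

/-- Note 2: every iteration of the merge and split rules terminates. -/
theorem merge_split_terminates [Nonempty α] (v : Finset α → ℝ) (hv : v ∅ = 0) :
    ¬ ∃ f : ℕ → Finset (Finset α), (∀ n, IsPartition (f n)) ∧
      ∀ n, MergeStep v (f n) (f (n + 1)) ∨ SplitStep v (f n) (f (n + 1)) :=
  merge_split_terminates_general v
end

section
/- Every D_c-stable partition of N is closed under the applications of the merge and split rules, i.e., neither the merge rule nor the split rule can be applied to it. -/
open Finset

variable {α : Type*} [DecidableEq α] [Fintype α]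

/-! If a collection `C` has the same union as some members `T` of the partition `P`, then
`C[P] = T`, so `D_c`-stability gives `sw(C) ≤ sw(T)`. A profitable merge of `T` violates this
for `C = {⋃ T}`, and a profitable split of `T` into `D` violates it for `C = D` and `{T}`. -/

section

variable {β : Type*} {P T : Finset (Finset β)}

namespace IsCollection

theorem singleton {S : Finset β} (hS : S ≠ ∅) : IsCollection {S} :=
  ⟨by simpa using hS, by simp⟩

variable [DecidableEq β]

theorem sup_ne_empty (hP : IsCollection P) (hTP : T ⊆ P)
    (hT : T.Nonempty) : T.sup id ≠ ∅ := by
  obtain ⟨S, hS⟩ := hT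
  intro h
  exact hP.1 S (hTP hS) (Finset.subset_empty.mp (h ▸ Finset.le_sup (f := id) hS))

theorem inter_sup_eq_empty (hP : IsCollection P) (hTP : T ⊆ P)
    {S : Finset β} (hS : S ∈ P) (hST : S ∉ T) : S ∩ T.sup id = ∅ :=
  Finset.disjoint_iff_inter_eq_empty.mp <| Finset.disjoint_sup_right.mpr fun _ hR =>
    hP.2 hS (hTP hR) fun h => hST (h ▸ hR)

theorem frame_eq_of_sup_eq {C : Finset (Finset β)} (hP : IsCollection P) (hTP : T ⊆ P)
    (hC : C.sup id = T.sup id) : frame C P = T := by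
  ext S
  simp only [frame, Finset.mem_erase, Finset.mem_image, hC]
  constructor
  · rintro ⟨hS, R, hR, rfl⟩
    by_cases hRT : R ∈ T
    · have hRU : R ⊆ T.sup id := Finset.le_sup (f := id) hRT
      rwa [Finset.inter_eq_left.mpr hRU]
    · exact absurd (hP.inter_sup_eq_empty hTP hR hRT) hS
  · intro hS
    exact ⟨hP.1 S (hTP hS), S, hTP hS, Finset.inter_eq_left.mpr (Finset.le_sup (f := id) hS)⟩

end IsCollection

theorem DcStable.sw_le_of_sup_eq [DecidableEq β] {v : Finset β → ℝ} {C : Finset (Finset β)}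
    (hstable : DcStable v P) (hP : IsCollection P) (hTP : T ⊆ P)
    (hC : IsCollection C) (hCT : C.sup id = T.sup id) : sw v C ≤ sw v T :=
  hP.frame_eq_of_sup_eq hTP hCT ▸ hstable C hC

end

theorem Dc_stable_closed_general (v : Finset α → ℝ)
    (P : Finset (Finset α)) (hP : IsPartition P) (hstable : DcStable v P) :
    (¬ ∃ P' : Finset (Finset α), MergeStep v P P') ∧
    (¬ ∃ P' : Finset (Finset α), SplitStep v P P') := by
  have hPcoll : IsCollection P := hP.1
  constructor
  · rintro ⟨-, T, hTP, hcard, hlt, -⟩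
    have hU : T.sup id ≠ ∅ :=
      hPcoll.sup_ne_empty hTP (Finset.card_pos.mp (by omega))
    have hle := hstable.sw_le_of_sup_eq hPcoll hTP (IsCollection.singleton hU)
      (Finset.sup_singleton (f := id))
    simp only [sw, Finset.sum_singleton] at hle
    linarith
  · rintro ⟨-, T, hT, D, ⟨hD, hDT⟩, -, hlt, -⟩
    have hle := hstable.sw_le_of_sup_eq hPcoll (Finset.singleton_subset_iff.mpr hT) hD
      (by rw [hDT, Finset.sup_singleton, id])
    simp only [sw, Finset.sum_singleton] at hle
    linarith

/-- Note 3: every `D_c`-stable partition is closed under the merge and split rules. -/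
theorem Dc_stable_closed [Nonempty α] (v : Finset α → ℝ) (hv : v ∅ = 0)
    (P : Finset (Finset α)) (hP : IsPartition P) (hstable : DcStable v P) :
    (¬ ∃ P' : Finset (Finset α), MergeStep v P P') ∧
    (¬ ∃ P' : Finset (Finset α), SplitStep v P P') :=
  Dc_stable_closed_general v P hP hstable
end
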